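/- arXiv:2303.07998 — 5 statements merged into one kernel-verified Lean document; each statement's English description precedes it below -/
import Mathlib

section
/- (Generalized Malgrange inequality) Let 0 < α ≤ 1 and suppose f ∈ C^{1,α}(ℝⁿ) is nonnegative on ℝⁿ. Then for every x ∈ ℝⁿ, |∇f(x)| ≤ ((α+1)/α^{α/(1+α)}) · [∇f]_α^{1/(1+α)} · f(x)^{α/(1+α)}, where [∇f]_α is the α-Hölder seminorm of the gradient of f over ℝⁿ. -/
/-!
On the ball of radius `t = ‖h‖` around `x` the derivative stays within `C t ^ α` of `f' x`,
so the mean value inequality gives `|f (x + h) - f x - f' x h| ≤ C t ^ (1 + α)`. Since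
`f (x + h) ≥ 0`, this yields `t ‖f' x‖ ≤ f x + C t ^ (1 + α)` for every `t > 0`, and minimizing
the right-hand side of `‖f' x‖ ≤ f x / t + C t ^ α` over `t` gives the inequality.
-/

open Real

section HolderDerivative

variable {E F : Type*} [NormedAddCommGroup E] [NormedSpace ℝ E]
  [NormedAddCommGroup F] [NormedSpace ℝ F] {α C : ℝ}

theorem norm_sub_sub_fderiv_le_of_holder {f : E → F} (hα : 0 ≤ α) (hC : 0 ≤ C)
    (hf : Differentiable ℝ f) {x : E}
    (hholder : ∀ y, ‖fderiv ℝ f y - fderiv ℝ f x‖ ≤ C * ‖y - x‖ ^ α) (h : E) :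
    ‖f (x + h) - f x - fderiv ℝ f x h‖ ≤ C * ‖h‖ ^ (1 + α) := by
  have hbound : ∀ y ∈ Metric.closedBall x ‖h‖, ‖fderiv ℝ f y - fderiv ℝ f x‖ ≤ C * ‖h‖ ^ α :=
    fun y hy => (hholder y).trans <| by
      gcongr
      exact mem_closedBall_iff_norm.mp hy
  have hmvt := (convex_closedBall x ‖h‖).norm_image_sub_le_of_norm_fderiv_le'
    (fun y _ => hf.differentiableAt) hbound (Metric.mem_closedBall_self (norm_nonneg h))
    (y := x + h) (by simp)
  rwa [add_sub_cancel_left, mul_assoc, ← rpow_add_one' (norm_nonneg h) (by positivity),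
    add_comm α 1] at hmvt

theorem mul_norm_fderiv_le_of_nonneg_of_holder {f : E → ℝ} (hα : 0 ≤ α) (hC : 0 ≤ C)
    (hf0 : ∀ y, 0 ≤ f y) (hf : Differentiable ℝ f) {x : E}
    (hholder : ∀ y, ‖fderiv ℝ f y - fderiv ℝ f x‖ ≤ C * ‖y - x‖ ^ α) {t : ℝ} (ht : 0 < t) :
    t * ‖fderiv ℝ f x‖ ≤ f x + C * t ^ (1 + α) := by
  have hstep : ∀ h : E, ‖h‖ = t → -fderiv ℝ f x h ≤ f x + C * t ^ (1 + α) := fun h hh => by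
    have htaylor := norm_sub_sub_fderiv_le_of_holder hα hC hf hholder h
    rw [Real.norm_eq_abs, hh] at htaylor
    linarith [hf0 (x + h), le_abs_self (f (x + h) - f x - fderiv ℝ f x h)]
  rw [mul_comm, ← le_div_iff₀ ht]
  refine ContinuousLinearMap.opNorm_le_of_unit_norm (by have := hf0 x; positivity) fun v hv => ?_
  have hnorm : ‖t • v‖ = t := by rw [norm_smul, hv, Real.norm_of_nonneg ht.le, mul_one]
  have h₁ := hstep (t • v) hnorm
  have h₂ := hstep (-(t • v)) (by rw [norm_neg, hnorm])
  simp only [map_neg, map_smul, smul_eq_mul, neg_neg] at h₁ h₂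
  have habs : |t * fderiv ℝ f x v| ≤ f x + C * t ^ (1 + α) := abs_le.mpr ⟨by linarith, h₂⟩
  rwa [abs_mul, abs_of_pos ht, mul_comm, ← le_div_iff₀ ht] at habs

end HolderDerivative

theorem le_of_forall_mul_le_add_mul_rpow {α a b C : ℝ} (hα : 0 < α) (hb : 0 ≤ b) (hC : 0 ≤ C)
    (h : ∀ t, 0 < t → t * a ≤ b + C * t ^ (1 + α)) :
    a ≤ (α + 1) / α ^ (α / (1 + α)) * C ^ (1 / (1 + α)) * b ^ (α / (1 + α)) := by
  rcases le_or_gt a 0 with ha | ha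
  · exact ha.trans (by positivity)
  rcases hC.eq_or_lt with rfl | hC
  · have := h ((b + 1) / a) (by positivity)
    rw [div_mul_cancel₀ _ ha.ne', zero_mul, add_zero] at this
    linarith
  have hp : 0 < 1 + α := by positivity
  -- The minimizing `t`, written in terms of `a` instead of `b` so that `b = 0` is covered too.
  set t := (a / ((1 + α) * C)) ^ α⁻¹ with ht
  have ht0 : 0 < t := by positivity
  have hCt : C * t ^ (1 + α) = t * a / (1 + α) := by
    rw [rpow_add ht0, rpow_one, rpow_inv_rpow (by positivity) hα.ne']
    field_simp
  have hta : t * a ≤ (1 + α) / α * b := by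
    have := h t ht0
    rw [hCt] at this
    rw [div_mul_eq_mul_div, le_div_iff₀ hα]
    field_simp at this
    linarith
  set e := α / (1 + α)
  set q := 1 / (1 + α)
  have hqe : q + e = 1 := by rw [← add_div, div_self hp.ne']
  have htae : (t * a) ^ e = a / ((1 + α) * C) ^ q := by
    rw [mul_rpow ht0.le ha.le, ht, ← rpow_mul (by positivity),
      show α⁻¹ * e = q by simp only [e, q]; field_simp, div_rpow ha.le (by positivity),
      div_mul_eq_mul_div, ← rpow_add ha, hqe, rpow_one]
  have := rpow_le_rpow (by positivity) hta (by positivity : 0 ≤ e)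
  rw [htae, div_le_iff₀ (by positivity), mul_rpow (by positivity) hb,
    div_rpow hp.le hα.le, mul_rpow hp.le hC.le] at this
  calc a ≤ (1 + α) ^ e / α ^ e * b ^ e * ((1 + α) ^ q * C ^ q) := this
    _ = (1 + α) ^ (q + e) / α ^ e * C ^ q * b ^ e := by rw [rpow_add hp]; ring
    _ = _ := by rw [hqe, rpow_one, add_comm]

section Gradient

variable {F : Type*} [NormedAddCommGroup F] [InnerProductSpace ℝ F] [CompleteSpace F]

theorem norm_gradient (f : F → ℝ) (x : F) : ‖gradient f x‖ = ‖fderiv ℝ f x‖ :=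
  (InnerProductSpace.toDual ℝ F).symm.norm_map _

theorem norm_gradient_sub_gradient (f : F → ℝ) (x y : F) :
    ‖gradient f x - gradient f y‖ = ‖fderiv ℝ f x - fderiv ℝ f y‖ := by
  rw [gradient, gradient, ← map_sub, LinearIsometryEquiv.norm_map]

end Gradient

theorem generalized_malgrange_inequality_general (n : ℕ) (α : ℝ) (hα : 0 < α)
    (f : EuclideanSpace ℝ (Fin n) → ℝ)
    (hf0 : ∀ x, 0 ≤ f x)
    (hf : ContDiff ℝ 1 f)
    (C : ℝ) (hC : 0 ≤ C)
    (hgrad : ∀ x y, ‖gradient f x - gradient f y‖ ≤ C * ‖x - y‖ ^ α) :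
    ∀ x, ‖gradient f x‖ ≤
      (α + 1) / α ^ (α / (1 + α)) * C ^ (1 / (1 + α)) * f x ^ (α / (1 + α)) := by
  intro x
  have hholder : ∀ y, ‖fderiv ℝ f y - fderiv ℝ f x‖ ≤ C * ‖y - x‖ ^ α := fun y =>
    norm_gradient_sub_gradient f y x ▸ hgrad y x
  rw [norm_gradient]
  exact le_of_forall_mul_le_add_mul_rpow hα (hf0 x) hC fun t ht =>
    mul_norm_fderiv_le_of_nonneg_of_holder hα.le hC hf0 (hf.differentiable one_ne_zero) hholder ht

/-- (Generalized Malgrange inequality) If `f ∈ C^{1,α}(ℝⁿ)` is nonnegative and `C ≥ 0` is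
any `α`-Hölder constant for the gradient `∇f` (in particular the Hölder seminorm
`[∇f]_α`), then `|∇f(x)| ≤ ((α+1)/α^{α/(1+α)}) · C^{1/(1+α)} · f(x)^{α/(1+α)}`. -/
theorem generalized_malgrange_inequality (n : ℕ) (α : ℝ) (hα : 0 < α) (hα1 : α ≤ 1)
    (f : EuclideanSpace ℝ (Fin n) → ℝ)
    (hf0 : ∀ x, 0 ≤ f x)
    (hf : ContDiff ℝ 1 f)
    (C : ℝ) (hC : 0 ≤ C)
    (hgrad : ∀ x y, ‖gradient f x - gradient f y‖ ≤ C * ‖x - y‖ ^ α) :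
    ∀ x, ‖gradient f x‖ ≤
      (α + 1) / α ^ (α / (1 + α)) * C ^ (1 / (1 + α)) * f x ^ (α / (1 + α)) :=
  generalized_malgrange_inequality_general n α hα f hf0 hf C hC hgrad
end

section
/- Let Ω ⊆ ℝⁿ, let 0 < α ≤ 1, let f : Ω → ℝ be nonnegative with finite α-Hölder seminorm [f]_α = [f]_{α,Ω}, let β > 1 and ε > 0. Then for all x, y ∈ Ω: |f(x)^β − f(y)^β| ≤ ((1+ε)·[f]_α^β / ((1+ε)^{1/(β−1)} − 1)^{β−1}) · |x − y|^{αβ} + ε · max{f(x)^β, f(y)^β}. -/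
/-!
Convexity of `x ↦ x ^ β` gives `(u + v) ^ β ≤ θ ^ (1 - β) u ^ β + (1 - θ) ^ (1 - β) v ^ β`
for every `θ ∈ (0, 1)`. Choosing `θ = (1 + ε) ^ (-1 / (β - 1))` makes the first coefficient
`1 + ε`; applied with `u = min (f x) (f y)` and `v = C ‖x - y‖ ^ α ≥ |f x - f y|`, this bounds
`max ^ β - min ^ β` by a multiple of `‖x - y‖ ^ (α β)` plus `ε · min ^ β`.
-/

open Real

theorem Real.add_rpow_le_weighted {u v θ p : ℝ} (hu : 0 ≤ u) (hv : 0 ≤ v) (hθ : 0 < θ)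
    (hθ1 : θ < 1) (hp : 1 ≤ p) :
    (u + v) ^ p ≤ θ ^ (1 - p) * u ^ p + (1 - θ) ^ (1 - p) * v ^ p := by
  have hθ' : 0 < 1 - θ := by linarith
  have h := (convexOn_rpow hp).2 (Set.mem_Ici.2 (div_nonneg hu hθ.le))
    (Set.mem_Ici.2 (div_nonneg hv hθ'.le)) hθ.le hθ'.le (by ring)
  have hsum : θ * (u / θ) + (1 - θ) * (v / (1 - θ)) = u + v := by field_simp
  have hweight : ∀ {w c : ℝ}, 0 ≤ w → 0 < c → c * (w / c) ^ p = c ^ (1 - p) * w ^ p :=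
    fun hw hc => by
      rw [div_rpow hw hc.le, rpow_sub hc, rpow_one]; field_simp
  simpa only [hsum, smul_eq_mul, hweight hu hθ, hweight hv hθ'] using h

theorem Real.add_rpow_le_one_add_mul {b s β ε : ℝ} (hb : 0 ≤ b) (hs : 0 ≤ s) (hβ : 1 < β)
    (hε : 0 < ε) :
    (b + s) ^ β ≤
      (1 + ε) * b ^ β + (1 + ε) / ((1 + ε) ^ (1 / (β - 1)) - 1) ^ (β - 1) * s ^ β := by
  set t := (1 + ε) ^ (1 / (β - 1))
  have hβ' : β - 1 ≠ 0 := by linarith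
  have ht : 1 < t := one_lt_rpow (by linarith) (one_div_pos.2 (by linarith))
  have ht' : 0 < t - 1 := by linarith
  have htpow : t ^ (β - 1) = 1 + ε := by
    rw [← rpow_mul (by linarith), one_div_mul_cancel hβ', rpow_one]
  have hneg : (1 : ℝ) - β = -(β - 1) := by ring
  have hθ : t⁻¹ ^ (1 - β) = 1 + ε := by
    rw [inv_rpow (by linarith), hneg, rpow_neg (by linarith), inv_inv, htpow]
  have hθ' : (1 - t⁻¹) ^ (1 - β) = (1 + ε) / (t - 1) ^ (β - 1) := by
    rw [show 1 - t⁻¹ = (t - 1) / t by field_simp, hneg, rpow_neg (by positivity),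
      div_rpow ht'.le (by linarith), htpow, inv_div]
  simpa only [hθ, hθ'] using
    add_rpow_le_weighted hb hs (inv_pos.2 (by linarith)) (inv_lt_one_of_one_lt₀ ht) hβ.le

theorem Real.abs_rpow_sub_rpow_le {a b s β ε : ℝ} (ha : 0 ≤ a) (hb : 0 ≤ b) (hab : |a - b| ≤ s)
    (hβ : 1 < β) (hε : 0 < ε) :
    |a ^ β - b ^ β| ≤
      (1 + ε) / ((1 + ε) ^ (1 / (β - 1)) - 1) ^ (β - 1) * s ^ β + ε * max (a ^ β) (b ^ β) := by
  wlog hba : b ≤ a generalizing a b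
  · simpa only [abs_sub_comm, max_comm] using this hb ha (abs_sub_comm a b ▸ hab) (by linarith)
  have hs : a ≤ b + s := by linarith [le_abs_self (a - b)]
  have hpow : b ^ β ≤ a ^ β := rpow_le_rpow hb hba (by linarith)
  have hbound : a ^ β ≤ (1 + ε) * b ^ β
      + (1 + ε) / ((1 + ε) ^ (1 / (β - 1)) - 1) ^ (β - 1) * s ^ β :=
    (rpow_le_rpow ha hs (by linarith)).trans
      (add_rpow_le_one_add_mul hb ((abs_nonneg _).trans hab) hβ hε)
  rw [abs_of_nonneg (sub_nonneg.2 hpow), max_eq_left hpow]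
  nlinarith

theorem power_almost_lipschitz_general {n : ℕ} (Ω : Set (EuclideanSpace ℝ (Fin n)))
    (α : ℝ)
    (f : EuclideanSpace ℝ (Fin n) → ℝ)
    (hf0 : ∀ x ∈ Ω, 0 ≤ f x)
    (C : ℝ) (hC : 0 ≤ C)
    (hHolder : ∀ x ∈ Ω, ∀ y ∈ Ω, |f x - f y| ≤ C * ‖x - y‖ ^ α)
    (β ε : ℝ) (hβ : 1 < β) (hε : 0 < ε) :
    ∀ x ∈ Ω, ∀ y ∈ Ω,
      |f x ^ β - f y ^ β| ≤
        (1 + ε) * C ^ β / ((1 + ε) ^ (1 / (β - 1)) - 1) ^ (β - 1) * ‖x - y‖ ^ (α * β)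
          + ε * max (f x ^ β) (f y ^ β) := by
  intro x hx y hy
  have hpow : (C * ‖x - y‖ ^ α) ^ β = C ^ β * ‖x - y‖ ^ (α * β) := by
    rw [mul_rpow hC (rpow_nonneg (norm_nonneg _) α), ← rpow_mul (norm_nonneg _)]
  have h := abs_rpow_sub_rpow_le (hf0 x hx) (hf0 y hy) (hHolder x hx y hy) hβ hε
  rw [hpow] at h
  convert h using 2
  ring

/-- "Almost Lipschitz" estimate for powers: if `f` is nonnegative on `Ω ⊆ ℝⁿ` with
`α`-Hölder constant `C ≥ 0` on `Ω` (in particular `C = [f]_{α,Ω}`), then for `β > 1` and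
`ε > 0`,
`|f(x)^β − f(y)^β| ≤ ((1+ε)·C^β/((1+ε)^{1/(β−1)} − 1)^{β−1})·|x−y|^{αβ}
  + ε·max{f(x)^β, f(y)^β}` for all `x, y ∈ Ω`. -/
theorem power_almost_lipschitz {n : ℕ} (Ω : Set (EuclideanSpace ℝ (Fin n)))
    (α : ℝ) (hα : 0 < α) (hα1 : α ≤ 1)
    (f : EuclideanSpace ℝ (Fin n) → ℝ)
    (hf0 : ∀ x ∈ Ω, 0 ≤ f x)
    (C : ℝ) (hC : 0 ≤ C)
    (hHolder : ∀ x ∈ Ω, ∀ y ∈ Ω, |f x - f y| ≤ C * ‖x - y‖ ^ α)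
    (β ε : ℝ) (hβ : 1 < β) (hε : 0 < ε) :
    ∀ x ∈ Ω, ∀ y ∈ Ω,
      |f x ^ β - f y ^ β| ≤
        (1 + ε) * C ^ β / ((1 + ε) ^ (1 / (β - 1)) - 1) ^ (β - 1) * ‖x - y‖ ^ (α * β)
          + ε * max (f x ^ β) (f y ^ β) :=
  power_almost_lipschitz_general Ω α f hf0 C hC hHolder β ε hβ hε
end

section
/- The Motzkin polynomial M(x,y) = x⁴y² + x²y⁴ − 3x²y² + 1 satisfies M(x,y) ≥ 0 for all (x,y) ∈ ℝ², and M is not a sum of squares of polynomials: there do not exist finitely many polynomials p_1, …, p_m ∈ ℝ[x,y] with M = p_1² + ⋯ + p_m². -/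
/-!
Viewed as a polynomial in `y` over `ℝ[x]`, the Motzkin polynomial is
`M = x² y⁴ + (x⁴ - 3x²) y² + 1`. In a representation `M = ∑ pᵢ²` the leading coefficients
cannot cancel, because `ℝ[x]` is formally real; hence `pᵢ = aᵢ + bᵢ y + cᵢ y²` with
`∑ aᵢ² = 1` and `∑ cᵢ² = x²`, so each `aᵢ` is a constant and each `cᵢ` a multiple of `x`.
The `y²`-coefficients give `∑ (2 aᵢ cᵢ + bᵢ²) = x⁴ - 3x²`; adding the values at `x = 1` and
`x = -1` cancels the odd terms `aᵢ cᵢ` and leaves `∑ (bᵢ(1)² + bᵢ(-1)²) = -4`.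

Nonnegativity is the AM-GM inequality for `x⁴y²`, `x²y⁴` and `1`.
-/

noncomputable section

open MvPolynomial

/-- The Motzkin polynomial `x⁴y² + x²y⁴ − 3x²y² + 1` as an element of `ℝ[x,y]`. -/
noncomputable def motzkin : MvPolynomial (Fin 2) ℝ :=
  X 0 ^ 4 * X 1 ^ 2 + X 0 ^ 2 * X 1 ^ 4 - 3 * (X 0 ^ 2 * X 1 ^ 2) + 1

theorem IsSumSq.exists_fin_sum_sq {R : Type*} [CommSemiring R] {s : R} (hs : IsSumSq s) :
    ∃ (n : ℕ) (x : Fin n → R), s = ∑ i, x i ^ 2 := by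
  induction hs with
  | zero => exact ⟨0, Fin.elim0, by simp⟩
  | sq_add a _ ih =>
    obtain ⟨n, x, rfl⟩ := ih
    exact ⟨n + 1, Fin.cons a x, by simp [Fin.sum_univ_succ, sq]⟩

theorem IsFormallyReal.eq_zero_of_sum_sq_eq_zero {R ι : Type*} [CommRing R] [IsFormallyReal R]
    {s : Finset ι} {x : ι → R} (h : ∑ j ∈ s, x j ^ 2 = 0) {i : ι} (hi : i ∈ s) : x i = 0 := by
  classical
  rw [← Finset.add_sum_erase s _ hi] at h
  have hsq : x i ^ 2 = 0 :=
    eq_zero_of_add_right (IsSquare.sq (x i)).isSumSq (IsSumSq.sum_sq _ x) h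
  exact IsNilpotent.eq_zero ⟨2, hsq⟩

namespace Polynomial

section FormallyReal

variable {R ι : Type*} [CommRing R] [IsFormallyReal R]

theorem natDegree_sum_sq (s : Finset ι) (p : ι → R[X]) :
    (∑ i ∈ s, p i ^ 2).natDegree = 2 * s.sup fun i => (p i).natDegree := by
  set d := s.sup fun i => (p i).natDegree
  have hle : ∀ i ∈ s, (p i).natDegree ≤ d := fun i hi =>
    Finset.le_sup (f := fun i => (p i).natDegree) hi
  refine le_antisymm (natDegree_sum_le_of_forall_le _ _ fun i hi =>
    natDegree_pow_le.trans (Nat.mul_le_mul_left 2 (hle i hi))) ?_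
  rcases Nat.eq_zero_or_pos d with hd | hd
  · simp [hd]
  have hs : s.Nonempty := Finset.nonempty_iff_ne_empty.2 (by rintro rfl; simp [d] at hd)
  obtain ⟨j, hj, hjd⟩ := Finset.exists_mem_eq_sup s hs fun i => (p i).natDegree
  have hpj : p j ≠ 0 := by rintro h; rw [h, natDegree_zero] at hjd; omega
  refine le_natDegree_of_ne_zero fun h => hpj <| leadingCoeff_eq_zero.mp ?_
  -- the top coefficient of `∑ pᵢ²` is the sum of the squares of the top coefficients
  have hcoeff : ∑ i ∈ s, (p i).coeff d ^ 2 = 0 := by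
    rw [← h, finsetSum_coeff]
    exact Finset.sum_congr rfl fun i hi => (coeff_pow_of_natDegree_le (hle i hi)).symm
  rw [leadingCoeff, ← hjd]
  exact IsFormallyReal.eq_zero_of_sum_sq_eq_zero hcoeff hj

theorem natDegree_le_of_natDegree_sum_sq_le {s : Finset ι} {p : ι → R[X]} {n : ℕ}
    (h : (∑ i ∈ s, p i ^ 2).natDegree ≤ 2 * n) {i : ι} (hi : i ∈ s) : (p i).natDegree ≤ n := by
  rw [natDegree_sum_sq] at h
  exact (Finset.le_sup (f := fun i => (p i).natDegree) hi).trans (by omega)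

instance : IsFormallyReal R[X] :=
  .of_eq_zero_of_eq_zero_of_mul_self_add fun {s a} hs h => by
    obtain ⟨n, x, rfl⟩ := hs.exists_fin_sum_sq
    set y : Fin (n + 1) → R[X] := Fin.cons a x
    have hy : ∑ i, y i ^ 2 = 0 := by simpa [y, Fin.sum_univ_succ, sq] using h
    have hdeg : ∀ i, (y i).natDegree ≤ 0 := fun i =>
      natDegree_le_of_natDegree_sum_sq_le (by simp [hy]) (Finset.mem_univ i)
    have hcoeff : ∑ i, (y i).coeff 0 ^ 2 = 0 := by
      simpa [coeff_zero_eq_eval_zero, eval_finsetSum] using congrArg (eval 0) hy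
    rw [show a = y 0 from rfl, eq_C_of_natDegree_le_zero (hdeg 0),
      IsFormallyReal.eq_zero_of_sum_sq_eq_zero hcoeff (Finset.mem_univ 0), C_0]

end FormallyReal

theorem coeff_sq_two {R : Type*} [CommSemiring R] (p : R[X]) :
    (p ^ 2).coeff 2 = 2 * (p.coeff 0 * p.coeff 2) + p.coeff 1 ^ 2 := by
  simp only [sq, coeff_mul, Finset.Nat.sum_antidiagonal_succ, Finset.Nat.antidiagonal_zero,
    Finset.sum_singleton]
  ring

open Bivariate

theorem eval_one_add_eval_neg_one_nonneg {ι : Type*} {s : Finset ι} {a b c : ι → ℝ[X]}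
    (ha : ∑ i ∈ s, a i ^ 2 = 1) (hc : ∑ i ∈ s, c i ^ 2 = X ^ 2) :
    0 ≤ (∑ i ∈ s, (2 * (a i * c i) + b i ^ 2)).eval 1 +
      (∑ i ∈ s, (2 * (a i * c i) + b i ^ 2)).eval (-1) := by
  have ha_const : ∀ i ∈ s, a i = C ((a i).coeff 0) := fun i hi =>
    eq_C_of_natDegree_le_zero (natDegree_le_of_natDegree_sum_sq_le (by simp [ha]) hi)
  have hc_eval_zero : ∑ i ∈ s, (c i).eval 0 ^ 2 = 0 := by
    simpa [eval_finsetSum] using congrArg (eval 0) hc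
  have hc_linear : ∀ i ∈ s, c i = C ((c i).coeff 1) * X := fun i hi => by
    have hdeg : (c i).natDegree ≤ 1 :=
      natDegree_le_of_natDegree_sum_sq_le (by rw [hc, natDegree_X_pow]) hi
    have hc_eq := eq_X_add_C_of_natDegree_le_one hdeg
    rwa [coeff_zero_eq_eval_zero, IsFormallyReal.eq_zero_of_sum_sq_eq_zero hc_eval_zero hi, C_0,
      add_zero] at hc_eq
  rw [eval_finsetSum, eval_finsetSum, ← Finset.sum_add_distrib]
  refine Finset.sum_nonneg fun i hi => ?_
  rw [ha_const i hi, hc_linear i hi]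
  simp only [eval_add, eval_mul, eval_pow, eval_C, eval_X, eval_ofNat]
  nlinarith [sq_nonneg ((b i).eval 1), sq_nonneg ((b i).eval (-1))]

theorem sum_sq_ne_motzkin {ι : Type*} (s : Finset ι) (P : ι → ℝ[X][Y]) :
    ∑ i ∈ s, P i ^ 2 ≠ C (X ^ 2) * Y ^ 4 + C (X ^ 4 - 3 * X ^ 2) * Y ^ 2 + 1 := by
  intro h
  have hdeg : ∀ i ∈ s, (P i).natDegree ≤ 2 := fun i hi =>
    natDegree_le_of_natDegree_sum_sq_le (by rw [h]; compute_degree) hi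
  have hcoeff (k : ℕ) : ∑ i ∈ s, (P i ^ 2).coeff k = (if k = 4 then X ^ 2 else 0) +
      (if k = 2 then X ^ 4 - 3 * X ^ 2 else 0) + (if k = 0 then 1 else 0) := by
    rw [← finsetSum_coeff, h]
    simp only [coeff_add, coeff_C_mul_X_pow, coeff_one]
  have h0 : ∑ i ∈ s, (P i).coeff 0 ^ 2 = 1 := by
    simpa [sq, mul_coeff_zero] using hcoeff 0
  have h2 : ∑ i ∈ s, (2 * ((P i).coeff 0 * (P i).coeff 2) + (P i).coeff 1 ^ 2) =
      X ^ 4 - 3 * X ^ 2 := by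
    simpa [coeff_sq_two] using hcoeff 2
  have h4 : ∑ i ∈ s, (P i).coeff 2 ^ 2 = X ^ 2 := by
    rw [← Finset.sum_congr rfl fun i hi => coeff_pow_of_natDegree_le (m := 2) (hdeg i hi)]
    simpa using hcoeff 4
  have := eval_one_add_eval_neg_one_nonneg (b := fun i => (P i).coeff 1) h0 h4
  rw [h2] at this
  norm_num at this

theorem _root_.aeval_motzkin :
    MvPolynomial.aeval (![C X, Y] : Fin 2 → ℝ[X][Y]) motzkin =
      (C (X ^ 2) * Y ^ 4 + C (X ^ 4 - 3 * X ^ 2) * Y ^ 2 + 1 : ℝ[X][Y]) := by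
  simp only [motzkin, map_add, map_sub, map_mul, map_pow, map_one, map_ofNat,
    MvPolynomial.aeval_X, Matrix.cons_val_zero, Matrix.cons_val_one]
  ring

end Polynomial

theorem three_mul_sq_mul_sq_le (x y : ℝ) :
    3 * (x ^ 2 * y ^ 2) ≤ x ^ 4 * y ^ 2 + x ^ 2 * y ^ 4 + 1 := by
  -- with `t = xy`: `M = t²(x - y)² + (t - 1)²(2t + 1) = t²(x + y)² + (t + 1)²(1 - 2t)`
  rcases le_total 0 (x * y) with h | h
  · nlinarith [mul_nonneg (sq_nonneg (x * y - 1)) (by linarith : 0 ≤ 2 * (x * y) + 1),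
      sq_nonneg (x * y * (x - y))]
  · nlinarith [mul_nonneg (sq_nonneg (x * y + 1)) (by linarith : 0 ≤ 1 - 2 * (x * y)),
      sq_nonneg (x * y * (x + y))]

/-- The Motzkin polynomial is nonnegative on `ℝ²` but is not a sum of squares of
polynomials. -/
theorem motzkin_nonneg_not_sum_of_squares :
    (∀ x y : ℝ, 0 ≤ MvPolynomial.eval ![x, y] motzkin) ∧
    ¬ ∃ (m : ℕ) (p : Fin m → MvPolynomial (Fin 2) ℝ), motzkin = ∑ i, p i ^ 2 := by
  refine ⟨fun x y => ?_, ?_⟩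
  · simp only [motzkin, map_add, map_sub, map_mul, map_pow, map_one, map_ofNat, eval_X,
      Matrix.cons_val_zero, Matrix.cons_val_one]
    linarith [three_mul_sq_mul_sq_le x y]
  · rintro ⟨m, p, hp⟩
    apply Polynomial.sum_sq_ne_motzkin Finset.univ fun i => aeval ![.C .X, .X] (p i)
    rw [← aeval_motzkin, hp, map_sum]
    simp only [map_pow]
end
end

section
/- Let P be a polynomial in n real variables and let C_P denote its Newton polytope, i.e., the convex hull in ℝⁿ of the exponent vectors (regarded as points of ℝⁿ) of the monomials of P with nonzero coefficient. Suppose there is a multi-index p such that the coefficient of x^p in P is negative and such that p (as a point of ℝⁿ) cannot be written as a + b with a, b ∈ (1/2)·C_P and a ≠ b. Then P is not a sum of squares of polynomials. -/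
open scoped Pointwise

noncomputable section

/-- The Newton polytope of a multivariate polynomial: the convex hull in `ℝⁿ` of the
exponent vectors of its monomials with nonzero coefficient. -/
noncomputable def newtonPolytope {n : ℕ} (P : MvPolynomial (Fin n) ℝ) : Set (Fin n → ℝ) :=
  convexHull ℝ ((fun d : Fin n →₀ ℕ => fun i => ((d i : ℕ) : ℝ)) ''
    (P.support : Set (Fin n →₀ ℕ)))

/-!
Reznick's observation: if `P = ∑ gₖ²`, then every exponent `e` of every `gₖ` lies in `½·C_P`.
By Krein–Milman it suffices to check this for the extreme points `e` of the convex hull of all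
exponents of all `gₖ`; for such an `e` the only way to write `2e` as a sum of two exponents is
`e + e`, so the coefficient of `x^{2e}` in `P` is `∑ₖ (coeff e gₖ)² > 0`, i.e. `2e ∈ C_P`.
Consequently, when `p ∈ ℝⁿ` is not the sum of two distinct points of `½·C_P`, every product
`coeff a gₖ · coeff b gₖ` with `a + b = p` has `a = b`, and the coefficient of `x^p` in `P` is a
sum of squares, hence nonnegative.
-/

theorem Set.Finite.convexHull_subset_of_extremePoints_subset {E : Type*} [AddCommGroup E]
    [Module ℝ E] [TopologicalSpace E] [T2Space E] [IsTopologicalAddGroup E] [ContinuousSMul ℝ E]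
    [LocallyConvexSpace ℝ E] {S T : Set E} (hS : S.Finite) (hT : Convex ℝ T)
    (h : (convexHull ℝ S).extremePoints ℝ ⊆ T) : convexHull ℝ S ⊆ T := by
  have hclosed : IsClosed (convexHull ℝ ((convexHull ℝ S).extremePoints ℝ)) :=
    (hS.subset extremePoints_convexHull_subset).isClosed_convexHull ℝ
  rw [← closure_convexHull_extremePoints (hS.isCompact_convexHull ℝ) (convex_convexHull ℝ S),
    hclosed.closure_eq]
  exact convexHull_min h hT

section ExponentVector

variable {σ : Type*}

def exponentVector (d : σ →₀ ℕ) : σ → ℝ := fun i => (d i : ℝ)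

theorem exponentVector_injective : Function.Injective (exponentVector (σ := σ)) :=
  fun _ _ h => Finsupp.ext fun i => Nat.cast_injective (congrFun h i)

theorem exponentVector_add (a b : σ →₀ ℕ) :
    exponentVector (a + b) = exponentVector a + exponentVector b := by
  funext i
  simp [exponentVector]

theorem exponentVector_mem_openSegment_of_add_eq {a b e : σ →₀ ℕ} (h : a + b = e + e) :
    exponentVector e ∈ openSegment ℝ (exponentVector a) (exponentVector b) := by
  convert midpoint_mem_openSegment (𝕜 := ℝ) (exponentVector a) (exponentVector b)
  rw [midpoint_eq_smul_add, ← exponentVector_add, h, exponentVector_add, ← two_smul ℝ, smul_smul]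
  norm_num

theorem half_smul_exponentVector_add_self (e : σ →₀ ℕ) :
    (2⁻¹ : ℝ) • exponentVector (e + e) = exponentVector e := by
  rw [exponentVector_add, ← two_smul ℝ, smul_smul]
  norm_num

end ExponentVector

namespace MvPolynomial

variable {σ : Type*}

theorem coeff_add_self_sq_of_mem_extremePoints {R : Type*} [CommSemiring R]
    (f : MvPolynomial σ R) {A : Set (σ → ℝ)}
    (hf : exponentVector '' (f.support : Set (σ →₀ ℕ)) ⊆ A) {e : σ →₀ ℕ}
    (he : exponentVector e ∈ A.extremePoints ℝ) :
    coeff (e + e) (f ^ 2) = coeff e f ^ 2 := by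
  classical
  rw [sq, sq, coeff_mul]
  refine Finset.sum_eq_single_of_mem (e, e) (Finset.HasAntidiagonal.mem_antidiagonal.2 rfl) ?_
  rintro ⟨a, b⟩ hab hne
  by_contra hprod
  obtain ⟨ha, hb⟩ := ne_zero_and_ne_zero_of_mul hprod
  obtain ⟨hae, hbe⟩ := (mem_extremePoints.1 he).2 _ (hf ⟨a, mem_support_iff.2 ha, rfl⟩) _
    (hf ⟨b, mem_support_iff.2 hb, rfl⟩)
    (exponentVector_mem_openSegment_of_add_eq (Finset.HasAntidiagonal.mem_antidiagonal.1 hab))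
  exact hne (Prod.ext (exponentVector_injective hae) (exponentVector_injective hbe))

theorem coeff_sq_nonneg_of_forall_add_eq {R : Type*} [CommRing R] [LinearOrder R]
    [IsStrictOrderedRing R] (f : MvPolynomial σ R) {p : σ →₀ ℕ}
    (h : ∀ a ∈ f.support, ∀ b ∈ f.support, a + b = p → a = b) :
    0 ≤ coeff p (f ^ 2) := by
  classical
  rw [sq, coeff_mul]
  refine Finset.sum_nonneg fun ⟨a, b⟩ hab => ?_
  by_cases ha : coeff a f = 0
  · simp [ha]
  by_cases hb : coeff b f = 0
  · simp [hb]
  rw [h a (mem_support_iff.2 ha) b (mem_support_iff.2 hb)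
    (Finset.HasAntidiagonal.mem_antidiagonal.1 hab)]
  exact mul_self_nonneg _

theorem exponentVector_mem_half_convexHull_sum_sq {ι : Type*} [Fintype ι]
    (g : ι → MvPolynomial σ ℝ) {k : ι} {d : σ →₀ ℕ} (hd : d ∈ (g k).support) :
    exponentVector d ∈
      (2⁻¹ : ℝ) • convexHull ℝ (exponentVector '' ((∑ l, g l ^ 2).support : Set (σ →₀ ℕ))) := by
  set S := ⋃ l, exponentVector '' ((g l).support : Set (σ →₀ ℕ))
  have hS : S.Finite := Set.finite_iUnion fun l => (g l).support.finite_toSet.image _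
  refine hS.convexHull_subset_of_extremePoints_subset ((convex_convexHull ℝ _).smul _) ?_
    (subset_convexHull ℝ S (Set.mem_iUnion.2 ⟨k, d, hd, rfl⟩))
  intro x hx
  obtain ⟨l, e, he, rfl⟩ : ∃ l, ∃ e ∈ (g l).support, exponentVector e = x := by
    simpa [S] using extremePoints_convexHull_subset hx
  have hcoeff : coeff (e + e) (∑ j, g j ^ 2) = ∑ j, coeff e (g j) ^ 2 := by
    rw [coeff_sum]
    exact Finset.sum_congr rfl fun j _ => coeff_add_self_sq_of_mem_extremePoints (g j)
      ((Set.subset_iUnion_of_subset j subset_rfl).trans (subset_convexHull ℝ S)) hx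
  have hpos : 0 < coeff (e + e) (∑ j, g j ^ 2) := by
    rw [hcoeff]
    exact Finset.sum_pos' (fun j _ => sq_nonneg _)
      ⟨l, Finset.mem_univ l, sq_pos_of_ne_zero (mem_support_iff.1 he)⟩
  exact Set.mem_smul_set.2 ⟨exponentVector (e + e),
    subset_convexHull ℝ _ ⟨e + e, mem_support_iff.2 hpos.ne', rfl⟩,
    half_smul_exponentVector_add_self e⟩

end MvPolynomial

/-- If a polynomial `P` has a monomial `x^p` with negative coefficient whose exponent
vector `p` cannot be written as `a + b` with `a ≠ b` both in the half Newton polytope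
`(1/2)·C_P`, then `P` is not a sum of squares of polynomials. -/
theorem not_sum_of_squares_of_newton_polytope_criterion
    {n : ℕ} (P : MvPolynomial (Fin n) ℝ)
    (p : (Fin n) →₀ ℕ) (hneg : MvPolynomial.coeff p P < 0)
    (hnot : ∀ a b : Fin n → ℝ,
      a ∈ (2⁻¹ : ℝ) • newtonPolytope P →
      b ∈ (2⁻¹ : ℝ) • newtonPolytope P →
      a ≠ b → (fun i => ((p i : ℕ) : ℝ)) ≠ a + b) :
    ¬ ∃ (m : ℕ) (g : Fin m → MvPolynomial (Fin n) ℝ), P = ∑ i, g i ^ 2 := by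
  rintro ⟨m, g, rfl⟩
  refine hneg.not_ge ?_
  rw [MvPolynomial.coeff_sum]
  refine Finset.sum_nonneg fun k _ =>
    MvPolynomial.coeff_sq_nonneg_of_forall_add_eq _ fun a ha b hb hab => ?_
  by_contra hne
  refine hnot _ _ (MvPolynomial.exponentVector_mem_half_convexHull_sum_sq g ha)
    (MvPolynomial.exponentVector_mem_half_convexHull_sum_sq g hb)
    (exponentVector_injective.ne hne) ?_
  rw [← exponentVector_add, hab]
  rfl
end
end

section
/- (Bony's extension lemma) Let Ω be a nonempty open proper subset of ℝⁿ and let p : Ω → ℝ be continuous and strictly positive on Ω. Then there exists a function φ that is infinitely differentiable on Ω, strictly positive on Ω, and whose derivatives of every order decay faster than p at the boundary: for every integer m ≥ 0 and every ε > 0 there exists δ > 0 such that every x ∈ Ω with dist(x, ℝⁿ ∖ Ω) < δ satisfies ‖D^m φ(x)‖ ≤ ε · p(x). -/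
/-!
Cover `Ω` by countably many smooth bumps `gₙ` compactly supported in `Ω`, and rescale `gₙ` so that
its derivatives of order `≤ n` are bounded by `2⁻ⁿ⁻¹ · min (1, min p on supp gₙ)`. Then
`φ = ∑ₙ gₙ` converges in every `Cᵏ`, so it is smooth. Near `∂Ω` the finitely many bumps with
`n < N` vanish, and for `N ≥ m` the remaining terms of `Dᵐφ` add up to at most `2⁻ᴺ p`.
-/

open Set Metric Function Filter
open scoped ContDiff

section Bounds

variable {𝕜 E F : Type*} [NontriviallyNormedField 𝕜] [NormedAddCommGroup E] [NormedSpace 𝕜 E]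
  [NormedAddCommGroup F] [NormedSpace 𝕜 F]

theorem ContDiff.exists_bound_iteratedFDeriv {f : E → F} (hf : ContDiff 𝕜 ∞ f)
    (hfc : HasCompactSupport f) (k : ℕ) : ∃ C, ∀ x, ‖iteratedFDeriv 𝕜 k f x‖ ≤ C :=
  (hf.continuous_iteratedFDeriv (mod_cast le_top)).bounded_above_of_compact_support
    (hfc.iteratedFDeriv k)

theorem ContDiff.exists_pos_mul_norm_iteratedFDeriv_le {f : E → F} (hf : ContDiff 𝕜 ∞ f)
    (hfc : HasCompactSupport f) (n : ℕ) {b : ℝ} (hb : 0 < b) :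
    ∃ w > 0, ∀ k ≤ n, ∀ x, w * ‖iteratedFDeriv 𝕜 k f x‖ ≤ b := by
  choose M hM using hf.exists_bound_iteratedFDeriv hfc
  have hM₀ : ∀ k, 0 ≤ M k := fun k => (norm_nonneg _).trans (hM k 0)
  set S := ∑ j ∈ Finset.range (n + 1), M j
  have hS : 0 ≤ S := Finset.sum_nonneg fun j _ => hM₀ j
  refine ⟨b / (1 + S), by positivity, fun k hk x => ?_⟩
  have hkS : ‖iteratedFDeriv 𝕜 k f x‖ ≤ 1 + S :=
    calc ‖iteratedFDeriv 𝕜 k f x‖ ≤ M k := hM k x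
      _ ≤ S := Finset.single_le_sum (fun j _ => hM₀ j) (by simp; omega)
      _ ≤ 1 + S := by linarith
  calc b / (1 + S) * ‖iteratedFDeriv 𝕜 k f x‖ ≤ b / (1 + S) * (1 + S) := by gcongr
    _ = b := by field_simp

theorem exists_summable_bound_iteratedFDeriv {f : ℕ → E → F} (hf : ∀ n, ContDiff 𝕜 ∞ (f n))
    (hfc : ∀ n, HasCompactSupport (f n)) {u : ℕ → ℝ} (hu : Summable u)
    (hfu : ∀ n, ∀ k ≤ n, ∀ x, ‖iteratedFDeriv 𝕜 k (f n) x‖ ≤ u n) :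
    ∃ v : ℕ → ℕ → ℝ, (∀ k, Summable (v k)) ∧
      ∀ k n x, ‖iteratedFDeriv 𝕜 k (f n) x‖ ≤ v k n := by
  choose C hC using fun n => (hf n).exists_bound_iteratedFDeriv (hfc n)
  refine ⟨fun k n => if k ≤ n then u n else C n k, fun k => hu.congr_atTop ?_, fun k n x => ?_⟩
  · filter_upwards [eventually_ge_atTop k] with n hn
    simp [hn]
  · dsimp only
    split_ifs with hkn
    exacts [hfu n k hkn x, hC n k x]

end Bounds

theorem norm_tsum_le_of_eq_zero_of_lt {F : Type*} [NormedAddCommGroup F] [CompleteSpace F]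
    {a : ℕ → F} {N : ℕ} {c : ℝ} (ha₀ : ∀ n < N, a n = 0)
    (ha : ∀ n ≥ N, ‖a n‖ ≤ (1 / 2) ^ (n + 1) * c) : ‖∑' n, a n‖ ≤ (1 / 2) ^ N * c := by
  refine tsum_of_norm_bounded (g := fun n => if n < N then 0 else (1 / 2) ^ (n + 1) * c) ?_
    fun n => ?_
  · refine (hasSum_nat_add_iff' N).1 ?_
    rw [Finset.sum_eq_zero fun i hi => if_pos (Finset.mem_range.1 hi), sub_zero]
    refine (hasSum_geometric_two' ((1 / 2) ^ N * c)).congr_fun fun n => ?_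
    rw [if_neg (by omega), one_div, inv_pow, inv_pow, pow_succ, pow_add]
    field_simp
  · split_ifs with hn
    · simp [ha₀ n hn]
    · exact ha n (not_lt.1 hn)

section Cover

variable {E : Type*} [NormedAddCommGroup E] [NormedSpace ℝ E] [FiniteDimensional ℝ E]

theorem IsOpen.exists_seq_contDiff_cover {U : Set E} (hU : IsOpen U) (hne : U.Nonempty) :
    ∃ g : ℕ → E → ℝ, (∀ n, ContDiff ℝ ∞ (g n)) ∧ (∀ n, HasCompactSupport (g n)) ∧
      (∀ n, tsupport (g n) ⊆ U) ∧ (∀ n x, 0 ≤ g n x) ∧ ∀ x ∈ U, ∃ n, 0 < g n x := by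
  choose f hfU hfc hf hfI hfx using
    fun x : U => exists_contDiff_tsupport_subset (n := ⊤) (hU.mem_nhds x.2)
  obtain ⟨T, hTc, hT⟩ := TopologicalSpace.isOpen_iUnion_countable (fun x => support (f x))
    fun x => (hf x).continuous.isOpen_support
  have hcover : ∀ x ∈ U, ∃ i ∈ T, f i x ≠ 0 := fun x hx => by
    have hx' : x ∈ ⋃ i, support (f i) := mem_iUnion.2 ⟨⟨x, hx⟩, by simp [hfx]⟩
    simpa [← hT] using hx'
  obtain ⟨s, rfl⟩ := hTc.exists_eq_range <| by
    obtain ⟨i, hi, -⟩ := hcover _ hne.some_mem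
    exact ⟨i, hi⟩
  refine ⟨fun n => f (s n), fun n => hf _, fun n => hfc _, fun n => hfU _,
    fun n x => (hfI _ (mem_range_self x)).1, fun x hx => ?_⟩
  obtain ⟨_, ⟨n, rfl⟩, hn⟩ := hcover x hx
  exact ⟨n, ((hfI _ (mem_range_self x)).1).lt_of_ne' hn⟩

theorem IsOpen.exists_seq_contDiff_cover_norm_iteratedFDeriv_le {Ω : Set E} (hΩ : IsOpen Ω)
    (hne : Ω.Nonempty) {p : E → ℝ} (hpc : ContinuousOn p Ω) (hpos : ∀ x ∈ Ω, 0 < p x) :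
    ∃ f : ℕ → E → ℝ, (∀ n, ContDiff ℝ ∞ (f n)) ∧ (∀ n, HasCompactSupport (f n)) ∧
      (∀ n, tsupport (f n) ⊆ Ω) ∧ (∀ n x, 0 ≤ f n x) ∧ (∀ x ∈ Ω, ∃ n, 0 < f n x) ∧
      (∀ n, ∀ k ≤ n, ∀ x, ‖iteratedFDeriv ℝ k (f n) x‖ ≤ (1 / 2) ^ (n + 1)) ∧
      ∀ n, ∀ k ≤ n, ∀ x ∈ Ω, ‖iteratedFDeriv ℝ k (f n) x‖ ≤ (1 / 2) ^ (n + 1) * p x := by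
  obtain ⟨g, hg, hgc, hgΩ, hg₀, hgpos⟩ := hΩ.exists_seq_contDiff_cover hne
  choose c hc₀ hcp using fun n =>
    (hgc n).isCompact.exists_forall_le' (hpc.mono (hgΩ n)) fun x hx => hpos x (hgΩ n hx)
  choose w hw₀ hw using fun n => (hg n).exists_pos_mul_norm_iteratedFDeriv_le (hgc n) n
    (b := (1 / 2) ^ (n + 1) * min 1 (c n)) (by have := hc₀ n; positivity)
  have hnorm : ∀ n k x,
      ‖iteratedFDeriv ℝ k (w n • g n) x‖ = w n * ‖iteratedFDeriv ℝ k (g n) x‖ := fun n k x => by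
    rw [iteratedFDeriv_const_smul_apply ((hg n).contDiffAt.of_le (mod_cast le_top)), norm_smul,
      Real.norm_of_nonneg (hw₀ n).le]
  refine ⟨fun n => w n • g n, fun n => (hg n).const_smul (w n), fun n => (hgc n).smul_left,
    fun n => (tsupport_smul_subset_right (fun _ => w n) (g n)).trans (hgΩ n),
    fun n x => smul_nonneg (hw₀ n).le (hg₀ n x), fun x hx => ?_, fun n k hk x => ?_,
    fun n k hk x hx => ?_⟩
  · obtain ⟨n, hn⟩ := hgpos x hx
    exact ⟨n, mul_pos (hw₀ n) hn⟩
  · calc ‖iteratedFDeriv ℝ k (w n • g n) x‖ ≤ (1 / 2) ^ (n + 1) * min 1 (c n) :=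
          (hnorm n k x).trans_le (hw n k hk x)
      _ ≤ (1 / 2) ^ (n + 1) := mul_le_of_le_one_right (by positivity) (min_le_left _ _)
  · by_cases hxg : x ∈ tsupport (g n)
    · calc ‖iteratedFDeriv ℝ k (w n • g n) x‖ ≤ (1 / 2) ^ (n + 1) * min 1 (c n) :=
            (hnorm n k x).trans_le (hw n k hk x)
        _ ≤ (1 / 2) ^ (n + 1) * p x := by gcongr; exact (min_le_right _ _).trans (hcp n x hxg)
    · have hzero : iteratedFDeriv ℝ k (g n) x = 0 :=
        notMem_support.1 fun h => hxg (support_iteratedFDeriv_subset k h)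
      rw [hnorm, hzero, norm_zero, mul_zero]
      have := hpos x hx
      positivity

end Cover

theorem IsCompact.exists_pos_le_infDist_compl {X : Type*} [PseudoMetricSpace X] {K U : Set X}
    (hK : IsCompact K) (hU : IsOpen U) (hU' : U ≠ univ) (hKU : K ⊆ U) :
    ∃ δ > 0, ∀ x ∈ K, δ ≤ infDist x Uᶜ :=
  hK.exists_forall_le' (continuous_infDist_pt _).continuousOn fun _ hx =>
    (hU.isClosed_compl.notMem_iff_infDist_pos (nonempty_compl.2 hU')).1 (not_not_intro (hKU hx))

/-- (Bony's extension lemma) If `Ω` is a nonempty open proper subset of `ℝⁿ` and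
`p : Ω → ℝ` is continuous and strictly positive on `Ω`, then there is a smooth, strictly
positive function `φ` on `Ω` all of whose derivatives decay faster than `p` at the
boundary of `Ω`. -/
theorem bony_extension_lemma (n : ℕ)
    (Ω : Set (EuclideanSpace ℝ (Fin n))) (hΩo : IsOpen Ω)
    (hΩne : Ω.Nonempty) (hΩproper : Ω ≠ Set.univ)
    (p : EuclideanSpace ℝ (Fin n) → ℝ)
    (hpc : ContinuousOn p Ω) (hppos : ∀ x ∈ Ω, 0 < p x) :
    ∃ φ : EuclideanSpace ℝ (Fin n) → ℝ,
      ContDiffOn ℝ (⊤ : ℕ∞) φ Ω ∧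
      (∀ x ∈ Ω, 0 < φ x) ∧
      ∀ (m : ℕ) (ε : ℝ), 0 < ε → ∃ δ : ℝ, 0 < δ ∧
        ∀ x ∈ Ω, Metric.infDist x Ωᶜ < δ →
          ‖iteratedFDerivWithin ℝ m φ Ω x‖ ≤ ε * p x := by
  obtain ⟨f, hf, hfc, hfΩ, hf₀, hfpos, hfu, hfp⟩ :=
    hΩo.exists_seq_contDiff_cover_norm_iteratedFDeriv_le hΩne hpc hppos
  obtain ⟨v, hv, hfv⟩ := exists_summable_bound_iteratedFDeriv hf hfc
    ((summable_nat_add_iff 1).2 summable_geometric_two) hfu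
  refine ⟨fun x => ∑' n, f n x,
    (contDiff_tsum hf (fun k _ => hv k) fun k n x _ => hfv k n x).contDiffOn,
    fun x hx => ?_, fun m ε hε => ?_⟩
  · obtain ⟨n, hn⟩ := hfpos x hx
    exact ((hv 0).of_norm_bounded fun n => by simpa using hfv 0 n x).tsum_pos
      (fun n => hf₀ n x) n hn
  obtain ⟨N₀, hN₀⟩ := exists_pow_lt_of_lt_one hε (by norm_num : (1 / 2 : ℝ) < 1)
  set N := max m N₀
  obtain ⟨δ, hδ, hδK⟩ := ((Finset.range N).isCompact_biUnion fun n _ => hfc n)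
    |>.exists_pos_le_infDist_compl hΩo hΩproper (iUnion₂_subset fun n _ => hfΩ n)
  refine ⟨δ, hδ, fun x hx hxδ => ?_⟩
  have hvanish : ∀ n < N, iteratedFDeriv ℝ m (f n) x = 0 := fun n hn => by
    have hxn : x ∉ tsupport (f n) := fun h =>
      (hxδ.trans_le (hδK x (mem_biUnion (Finset.mem_coe.2 (Finset.mem_range.2 hn)) h))).false
    exact notMem_support.1 fun h => hxn (support_iteratedFDeriv_subset m h)
  rw [iteratedFDerivWithin_of_isOpen m hΩo hx,
    iteratedFDeriv_tsum_apply hf (fun k _ => hv k) (fun k n x _ => hfv k n x) (mod_cast le_top)]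
  calc ‖∑' n, iteratedFDeriv ℝ m (f n) x‖ ≤ (1 / 2) ^ N * p x :=
        norm_tsum_le_of_eq_zero_of_lt hvanish fun n hn =>
          hfp n m ((le_max_left _ _).trans hn) x hx
    _ ≤ ε * p x := by
        gcongr
        · exact (hppos x hx).le
        · exact (pow_le_pow_of_le_one (by norm_num) (by norm_num) (le_max_right _ _)).trans hN₀.le
end
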